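/- In the Artin group A(6,3,2) = ⟨s, t, r | ststst = tststs, trt = rtr, sr = rs⟩, for every k ≥ 1 and all nonzero integers n_1, …, n_k, the element tststr commutes with the element (s^{n_1} t s t r t^{-1})(s^{n_2} t s t r t^{-1}) ⋯ (s^{n_k} t s t r t^{-1}). In particular, for each such product w, the subgroup ⟨tststr, w⟩ of A(6,3,2) is abelian. -/

import Mathlib

namespace A632

/-- The defining relations of the Artin group
`A(6,3,2) = ⟨s, t, r | ststst = tststs, trt = rtr, sr = rs⟩`,
with `0, 1, 2` playing the roles of `s, t, r`. -/
def rels : Set (FreeGroup (Fin 3)) :=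
  { FreeGroup.of 0 * FreeGroup.of 1 * FreeGroup.of 0 * FreeGroup.of 1 *
      FreeGroup.of 0 * FreeGroup.of 1 *
      (FreeGroup.of 1 * FreeGroup.of 0 * FreeGroup.of 1 * FreeGroup.of 0 *
        FreeGroup.of 1 * FreeGroup.of 0)⁻¹,
    FreeGroup.of 1 * FreeGroup.of 2 * FreeGroup.of 1 *
      (FreeGroup.of 2 * FreeGroup.of 1 * FreeGroup.of 2)⁻¹,
    FreeGroup.of 0 * FreeGroup.of 2 * (FreeGroup.of 2 * FreeGroup.of 0)⁻¹ }

/-- The Artin group `A(6,3,2)`. -/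
abbrev Grp := PresentedGroup rels

def s : Grp := PresentedGroup.of 0
def t : Grp := PresentedGroup.of 1
def r : Grp := PresentedGroup.of 2

end A632

/-!
`tststr` commutes with `s` (by `sr = rs` and the `s`–`t` braid relation) and with `tstrt⁻¹`
(by `sr = rs` and the `t`–`r` braid relation), hence with every factor `s^m tstrt⁻¹` and with any
product of such factors. A group generated by two commuting elements is abelian.
-/

theorem Subgroup.isMulCommutative_closure_pair {G : Type*} [Group G] {a b : G}
    (h : Commute a b) : IsMulCommutative (Subgroup.closure {a, b}) := by
  refine Subgroup.isMulCommutative_closure ?_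
  rintro x (rfl | rfl) y (rfl | rfl)
  exacts [rfl, h, h.symm, rfl]

namespace A632

theorem braid_s_t : s * t * s * t * s * t = t * s * t * s * t * s :=
  PresentedGroup.mk_eq_mk_of_mul_inv_mem (Set.mem_insert _ _)

theorem braid_t_r : t * r * t = r * t * r :=
  PresentedGroup.mk_eq_mk_of_mul_inv_mem (Set.mem_insert_of_mem _ (Set.mem_insert _ _))

theorem commute_s_r : Commute s r :=
  PresentedGroup.mk_eq_mk_of_mul_inv_mem (Set.mem_insert_of_mem _ (Set.mem_insert_of_mem _ rfl))

theorem t_mul_r_mul_t_inv : t * r * t⁻¹ = r⁻¹ * t * r :=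
  calc t * r * t⁻¹ = r⁻¹ * (r * t * r) * t⁻¹ := by group
    _ = r⁻¹ * t * r := by rw [← braid_t_r]; group

theorem r_mul_t_mul_r_inv : r * t * r⁻¹ = t⁻¹ * r * t :=
  calc r * t * r⁻¹ = t⁻¹ * (t * r * t) * r⁻¹ := by group
    _ = t⁻¹ * r * t := by rw [braid_t_r]; group

theorem commute_tststr_s : Commute (t * s * t * s * t * r) s :=
  calc t * s * t * s * t * r * s
      = t * s * t * s * t * s * r := by rw [mul_assoc _ r, ← commute_s_r.eq, ← mul_assoc]
    _ = s * t * s * t * s * t * r := by rw [braid_s_t]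
    _ = s * (t * s * t * s * t * r) := by group

theorem commute_tststr_tstrt_inv : Commute (t * s * t * s * t * r) (t * s * t * r * t⁻¹) :=
  calc t * s * t * s * t * r * (t * s * t * r * t⁻¹)
      = t * s * t * s * t * r * t * s * (t * r * t⁻¹) := by group
    _ = t * s * t * s * t * r * t * (s * r⁻¹) * (t * r) := by rw [t_mul_r_mul_t_inv]; group
    _ = t * s * t * s * t * (r * t * r⁻¹) * (s * t * r) := by
        rw [commute_s_r.inv_right.eq]; group
    _ = t * s * t * (s * r) * (t * s * t * r) := by rw [r_mul_t_mul_r_inv]; group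
    _ = t * s * t * r * t⁻¹ * (t * s * t * s * t * r) := by rw [commute_s_r.eq]; group

theorem commute_tststr_zpow_s_mul_tstrt_inv (m : ℤ) :
    Commute (t * s * t * s * t * r) (s ^ m * t * s * t * r * t⁻¹) := by
  have h : s ^ m * t * s * t * r * t⁻¹ = s ^ m * (t * s * t * r * t⁻¹) := by group
  rw [h]
  exact (commute_tststr_s.zpow_right m).mul_right commute_tststr_tstrt_inv

end A632

open A632 in
/-- In `A(6,3,2)`, the element `tststr` commutes with every product
`(s^{n₁}tstrt⁻¹)⋯(s^{n_k}tstrt⁻¹)` with all `nᵢ` nonzero; in particular the subgroup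
generated by `tststr` and such a product is abelian. -/
theorem A632_tststr_commutes (k : ℕ) (n : Fin k → ℤ) :
    Commute (t * s * t * s * t * r)
      (((List.finRange k).map fun p => s ^ n p * t * s * t * r * t⁻¹).prod) ∧
    IsMulCommutative (Subgroup.closure {t * s * t * s * t * r,
      ((List.finRange k).map fun p => s ^ n p * t * s * t * r * t⁻¹).prod}) := by
  have h : Commute (t * s * t * s * t * r)
      (((List.finRange k).map fun p => s ^ n p * t * s * t * r * t⁻¹).prod) :=
    Commute.list_prod_right _ _ <| by
      simp only [List.mem_map]
      rintro _ ⟨p, -, rfl⟩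
      exact commute_tststr_zpow_s_mul_tstrt_inv (n p)
  exact ⟨h, Subgroup.isMulCommutative_closure_pair h⟩
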